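/- Let G be a totally disconnected locally compact group and z an element of G with C(z) ≠ {e}. Let g ∈ C(z) with g ≠ e, and let ν = p·δ_g + (1−p)·δ_e where p ∈ (0,1) and p ≠ 1/2. Then the measure μ = ν * δ_z is not a Choquet-Deny measure; that is, there exists a bounded continuous μ-harmonic function on G that is not constant on the left cosets of G_μ. -/

import Mathlib

open Filter Topology MeasureTheory Pointwise ENNReal

section MeasDefs
variable {G : Type*} [Group G] [TopologicalSpace G] [MeasurableSpace G]

/-- The support of a measure: the set of points all of whose neighbourhoods
have positive measure. -/
def measSupport (μ : Measure G) : Set G := {x : G | ∀ U ∈ nhds x, 0 < μ U}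

/-- `G_μ`: the smallest closed subgroup of `G` containing the support of `μ`. -/
def adaptedSubgroup [IsTopologicalGroup G] (μ : Measure G) : Subgroup G :=
  (Subgroup.closure (measSupport μ)).topologicalClosure

/-- `μ` is a Choquet–Deny measure: every bounded continuous `μ`-harmonic function
`h` (i.e. `h(g) = ∫ h(g g') μ(dg')` for all `g`) is constant on the left cosets
of `G_μ`. -/
def IsChoquetDenyMeasure [IsTopologicalGroup G] (μ : Measure G) : Prop :=
  ∀ h : G → ℂ, Continuous h → (∃ C : ℝ, ∀ g : G, ‖h g‖ ≤ C) →
    (∀ g : G, h g = ∫ x, h (g * x) ∂μ) →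
    ∀ g : G, ∀ y ∈ adaptedSubgroup μ, h (g * y) = h g

/-- Weak convergence of a net of measures along a filter, in the
`σ(M₁(G), C_b(G))`-topology: integrals of bounded continuous functions converge. -/
def WeaklyTendsto {ι : Type*} (l : Filter ι) (μs : ι → Measure G) (ν : Measure G) : Prop :=
  ∀ f : BoundedContinuousFunction G ℝ,
    Tendsto (fun a => ∫ x, f x ∂(μs a)) l (nhds (∫ x, f x ∂ν))

end MeasDefs

/-- The contraction subgroup of an element `z` of a topological group:
all `x` with `zⁿ x z⁻ⁿ → 1` as `n → ∞`. -/
def ContractionElt {G : Type*} [Group G] [TopologicalSpace G] (z : G) : Set G :=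
  {x : G | Tendsto (fun n : ℕ => z ^ n * x * (z ^ n)⁻¹) atTop (nhds 1)}

/-!
Let `H` be the closure of `⟨z⟩`. Elements of `H` commute with `z`, so the nontrivial contracted
element `g` is not in `H`, and van Dantzig's theorem gives a compact open subgroup `U` with
`g ∉ U H U`. Let `f` be the indicator of the clopen set `U H` and `P` the Markov operator of
`μ = p δ_{gz} + (1 - p) δ_z`. A word of length `n` in `gz, z` is `c zⁿ` with `c` a product of
conjugates `zᵏ g z⁻ᵏ`, `k < n`, which tend to `1`; hence `Pⁿ f` stabilises pointwise, and its
limit `h` is bounded, left `U`-invariant (so continuous) and `μ`-harmonic. For `M` with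
`zᵏ g z⁻ᵏ ∈ U` when `k ≥ M`, every word keeps `z^M` inside `U H` and `g z^M` outside it, so
`h (z^M) = 1` and `h (g z^M) = 0`, although `z⁻ᴹ g z^M ∈ G_μ`.
-/

section TwoPointAverage

variable {G : Type*} [Group G]

def twoPointAvg (a b : ℝ) (s t : G) (φ : G → ℝ) (x : G) : ℝ :=
  a * φ (x * s) + b * φ (x * t)

variable {a b : ℝ} {s t : G}

lemma twoPointAvg_iterate_congr {φ ψ : G → ℝ} :
    ∀ {n : ℕ} {x : G}, (∀ y ∈ ({s, t} : Set G) ^ n, φ (x * y) = ψ (x * y)) →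
      (twoPointAvg a b s t)^[n] φ x = (twoPointAvg a b s t)^[n] ψ x
  | 0, x, h => by simpa using h 1 rfl
  | n + 1, x, h => by
    simp only [Function.iterate_succ_apply', twoPointAvg]
    congr 2 <;> refine twoPointAvg_iterate_congr fun y hy => ?_ <;> rw [mul_assoc] <;>
      exact h _ (by rw [pow_succ']; exact Set.mul_mem_mul (by simp) hy)

lemma twoPointAvg_iterate_const (hab : a + b = 1) (c : ℝ) (n : ℕ) :
    (twoPointAvg a b s t)^[n] (fun _ => c) = fun _ => c := by
  induction n with
  | zero => rfl
  | succ n ih =>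
    ext x
    rw [Function.iterate_succ_apply', ih, twoPointAvg, ← add_mul, hab, one_mul]

lemma abs_twoPointAvg_iterate_le (ha : 0 ≤ a) (hb : 0 ≤ b) (hab : a + b = 1) {φ : G → ℝ}
    {C : ℝ} (hφ : ∀ y, |φ y| ≤ C) (n : ℕ) (x : G) : |(twoPointAvg a b s t)^[n] φ x| ≤ C := by
  induction n generalizing x with
  | zero => exact hφ x
  | succ n ih =>
    rw [Function.iterate_succ_apply', twoPointAvg]
    calc _ ≤ |a * _| + |b * _| := abs_add_le _ _
      _ ≤ a * C + b * C := by
          rw [abs_mul, abs_mul, abs_of_nonneg ha, abs_of_nonneg hb]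
          gcongr <;> apply ih
      _ = C := by rw [← add_mul, hab, one_mul]

lemma twoPointAvg_iterate_mul_left {φ : G → ℝ} {u : G} (hφ : ∀ y, φ (u * y) = φ y) (n : ℕ)
    (x : G) : (twoPointAvg a b s t)^[n] φ (u * x) = (twoPointAvg a b s t)^[n] φ x := by
  induction n generalizing x with
  | zero => exact hφ x
  | succ n ih => simp only [Function.iterate_succ_apply', twoPointAvg, mul_assoc, ih]

lemma eq_twoPointAvg_of_tendsto_iterate {φ ψ : G → ℝ}
    (hψ : ∀ x, Tendsto (fun n => (twoPointAvg a b s t)^[n] φ x) atTop (𝓝 (ψ x))) (x : G) :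
    ψ x = twoPointAvg a b s t ψ x := by
  refine tendsto_nhds_unique ((tendsto_add_atTop_iff_nat 1).2 (hψ x)) ?_
  simp only [Function.iterate_succ_apply', twoPointAvg]
  exact ((hψ _).const_mul a).add ((hψ _).const_mul b)

end TwoPointAverage

theorem Set.Finite.pow {M : Type*} [Monoid M] {s : Set M} (hs : s.Finite) (n : ℕ) :
    (s ^ n).Finite := by
  induction n with
  | zero => simp
  | succ n ih => rw [pow_succ]; exact ih.mul hs

section Words

variable {G : Type*} [Group G] {g z : G}

lemma exists_mem_mul_pow_eq_of_mem_pow {U : Subgroup G} {m : ℕ}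
    (hU : ∀ k ≥ m, z ^ k * g * (z ^ k)⁻¹ ∈ U) :
    ∀ {n : ℕ}, ∀ y ∈ ({g * z, z} : Set G) ^ n, ∃ u ∈ U, z ^ m * y = u * z ^ (m + n)
  | 0, y, hy => ⟨1, one_mem U, by simp_all⟩
  | n + 1, _, hy => by
    rw [pow_succ] at hy
    obtain ⟨y, hy, t, ht, rfl⟩ := hy
    obtain ⟨u, hu, huy⟩ := exists_mem_mul_pow_eq_of_mem_pow hU y hy
    rcases ht with rfl | rfl
    · refine ⟨u * (z ^ (m + n) * g * (z ^ (m + n))⁻¹), mul_mem hu (hU _ (by omega)), ?_⟩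
      rw [← mul_assoc, huy]; group
    · exact ⟨u, hu, by rw [← mul_assoc, huy]; group⟩

lemma mul_mem_mul_subgroup_iff {s : Set G} {H : Subgroup G} {k : G} (hk : k ∈ H) (w : G) :
    w * k ∈ s * H ↔ w ∈ s * H := by
  refine ⟨fun hw => ?_, fun hw => ?_⟩ <;> obtain ⟨u, hu, k', hk', e⟩ := Set.mem_mul.1 hw
  · exact Set.mem_mul.2 ⟨u, hu, k' * k⁻¹, H.mul_mem hk' (H.inv_mem hk), by
      rw [← mul_assoc, e, mul_inv_cancel_right]⟩
  · exact Set.mem_mul.2 ⟨u, hu, k' * k, H.mul_mem hk' hk, by rw [← mul_assoc, e]⟩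

lemma mem_mul_and_notMem_mul_of_mem_pow {U H : Subgroup G} (hzH : z ∈ H)
    (hsep : ∀ u ∈ U, ∀ u' ∈ U, u * g * u' ∉ H) {M : ℕ}
    (hM : ∀ k ≥ M, z ^ k * g * (z ^ k)⁻¹ ∈ U) {n : ℕ} {y : G}
    (hy : y ∈ ({g * z, z} : Set G) ^ n) :
    z ^ M * y ∈ (U : Set G) * H ∧ g * z ^ M * y ∉ (U : Set G) * H := by
  obtain ⟨u, hu, e⟩ := exists_mem_mul_pow_eq_of_mem_pow hM y hy
  refine ⟨e ▸ Set.mul_mem_mul hu (H.pow_mem hzH _), fun hmem => ?_⟩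
  obtain ⟨u', hu', k, hk, e'⟩ := Set.mem_mul.1 hmem
  have hk' : u'⁻¹ * g * u = k * (z ^ (M + n))⁻¹ := calc
    u'⁻¹ * g * u = u'⁻¹ * (g * (z ^ M * y)) * (z ^ (M + n))⁻¹ := by rw [e]; group
    _ = k * (z ^ (M + n))⁻¹ := by rw [← mul_assoc g, ← e']; group
  exact hsep u'⁻¹ (inv_mem hu') u hu (hk' ▸ H.mul_mem hk (H.inv_mem (H.pow_mem hzH _)))

end Words

section TopologicalGroup

variable {G : Type*} [Group G] [TopologicalSpace G] [IsTopologicalGroup G]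

theorem exists_isOpen_isCompact_subgroup_subset [LocallyCompactSpace G]
    [TotallyDisconnectedSpace G] {O : Set G} (hO : O ∈ 𝓝 1) :
    ∃ U : Subgroup G, IsOpen (U : Set G) ∧ IsCompact (U : Set G) ∧ (U : Set G) ⊆ O := by
  obtain ⟨s, hs, hsO, hsc⟩ := local_compact_nhds hO
  obtain ⟨K, hKc, hK1, hKs⟩ :=
    loc_compact_Haus_tot_disc_of_zero_dim.mem_nhds_iff.1 (interior_mem_nhds.2 hs)
  have hK : IsCompact K := hsc.of_isClosed_subset hKc.isClosed (hKs.trans interior_subset)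
  obtain ⟨V, hV, hKV⟩ := compact_open_separated_mul_right hK hKc.isOpen subset_rfl
  set W := V ∩ V⁻¹
  -- `K W ⊆ K` and `1 ∈ K`, so the subgroup generated by the symmetric set `W` lies in `K`.
  have hKW : K * (W ∪ W⁻¹) ⊆ K := by
    grw [← hKV]; gcongr; simp [W, Set.inter_comm]
  have hWK : ∀ x ∈ Subgroup.closure W, ∀ k ∈ K, k * x ∈ K := by
    intro x hx
    rw [← Subgroup.mem_toSubmonoid, Subgroup.closure_toSubmonoid] at hx
    induction hx using Submonoid.closure_induction with
    | mem y hy => exact fun k hk => hKW (Set.mul_mem_mul hk hy)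
    | one => simp
    | mul y y' _ _ ih ih' => exact fun k hk => mul_assoc k y y' ▸ ih' _ (ih k hk)
  have hUo : IsOpen (Subgroup.closure W : Set G) :=
    Subgroup.isOpen_of_mem_nhds _ (Filter.mem_of_superset
      (Filter.inter_mem hV (inv_mem_nhds_one G hV)) Subgroup.subset_closure)
  have hUK : (Subgroup.closure W : Set G) ⊆ K := fun x hx => by
    simpa using hWK x hx 1 hK1
  exact ⟨_, hUo, hK.of_isClosed_subset (Subgroup.isClosed_of_isOpen _ hUo) hUK,
    hUK.trans (hKs.trans (interior_subset.trans hsO))⟩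

theorem continuous_of_forall_mul_left_eq {X : Type*} [TopologicalSpace X] {U : Set G}
    (hU : U ∈ 𝓝 1) {f : G → X} (hf : ∀ u ∈ U, ∀ x, f (u * x) = f x) : Continuous f :=
  continuous_iff_continuousAt.2 fun x => continuousAt_const.congr <|
    Filter.mem_of_superset (mul_singleton_mem_nhds_of_nhds_one x hU) <| by
      rintro _ ⟨u, hu, _, rfl, rfl⟩
      exact (hf u hu _).symm

theorem isOpen_of_mul_left_subset {U A : Set G} (hU : U ∈ 𝓝 1) (hA : U * A ⊆ A) : IsOpen A :=
  isOpen_iff_mem_nhds.2 fun x hx =>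
    Filter.mem_of_superset (mul_singleton_mem_nhds_of_nhds_one x hU)
      ((Set.mul_subset_mul_left (Set.singleton_subset_iff.2 hx)).trans hA)

theorem isClopen_of_mul_left_subset {U : Subgroup G} (hU : IsOpen (U : Set G)) {A : Set G}
    (hA : (U : Set G) * A ⊆ A) : IsClopen A := by
  have hU1 := hU.mem_nhds (one_mem U)
  refine ⟨isOpen_compl_iff.1 (isOpen_of_mul_left_subset hU1 ?_),
    isOpen_of_mul_left_subset hU1 hA⟩
  rintro _ ⟨u, hu, y, hy, rfl⟩ hyA
  exact hy (by simpa using hA (Set.mul_mem_mul (inv_mem hu) hyA))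

theorem IsClopen.exists_nhds_one_mul_mem_iff {A K : Set G} (hA : IsClopen A)
    (hK : IsCompact K) : ∃ V ∈ 𝓝 (1 : G), ∀ k ∈ K, ∀ v ∈ V, (k * v ∈ A ↔ k ∈ A) := by
  obtain ⟨V₁, hV₁, hV₁A⟩ :=
    compact_open_separated_mul_right (hK.inter_right hA.isClosed) hA.isOpen Set.inter_subset_right
  obtain ⟨V₂, hV₂, hV₂A⟩ := compact_open_separated_mul_right (hK.inter_right hA.compl.isClosed)
    hA.compl.isOpen Set.inter_subset_right
  refine ⟨V₁ ∩ V₂, Filter.inter_mem hV₁ hV₂, fun k hk v hv => ⟨fun hkv => ?_, fun hkA => ?_⟩⟩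
  · by_contra hkA
    exact hV₂A (Set.mul_mem_mul ⟨hk, hkA⟩ hv.2) hkv
  · exact hV₁A (Set.mul_mem_mul ⟨hk, hkA⟩ hv.1)

theorem notMem_topologicalClosure_zpowers [T2Space G] {g z : G} (hg : g ∈ ContractionElt z)
    (hgne : g ≠ 1) : g ∉ (Subgroup.zpowers z).topologicalClosure := by
  intro hgH
  have hcomm : Commute g z := Subgroup.mem_centralizer_singleton_iff.1 <|
    Subgroup.topologicalClosure_minimal (t := Subgroup.centralizer {z}) _
      (Subgroup.zpowers_le.2 (Subgroup.mem_centralizer_singleton_iff.2 rfl))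
      (Set.isClosed_centralizer _) hgH
  refine hgne (tendsto_nhds_unique tendsto_const_nhds (hg.congr fun n => ?_))
  rw [(hcomm.symm.pow_left n).eq, mul_inv_cancel_right]

theorem exists_isOpen_isCompact_subgroup_mul_mul_notMem [LocallyCompactSpace G]
    [TotallyDisconnectedSpace G] {g : G} {H : Set G} (hH : IsClosed H) (hg : g ∉ H) :
    ∃ U : Subgroup G, IsOpen (U : Set G) ∧ IsCompact (U : Set G) ∧
      ∀ u ∈ U, ∀ u' ∈ U, u * g * u' ∉ H := by
  have hev : ∀ᶠ p : G × G in 𝓝 1 ×ˢ 𝓝 1, p.1 * g * p.2 ∉ H := by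
    rw [← nhds_prod_eq]
    refine ((continuous_fst.mul continuous_const).mul continuous_snd).continuousAt.eventually
      (hH.isOpen_compl.mem_nhds ?_)
    simpa using hg
  obtain ⟨V, hV, hVV⟩ := Filter.mem_prod_self_iff.1 hev
  obtain ⟨U, hUo, hUc, hUV⟩ := exists_isOpen_isCompact_subgroup_subset hV
  exact ⟨U, hUo, hUc, fun u hu u' hu' => hVV (Set.mk_mem_prod (hUV hu) (hUV hu'))⟩

end TopologicalGroup

theorem twoPointAvg_iterate_eventuallyConst {G : Type*} [Group G] [TopologicalSpace G]
    [IsTopologicalGroup G] {a b : ℝ} {g z : G} {U : Subgroup G} (hU : (U : Set G) ∈ 𝓝 1)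
    (hUc : IsCompact (U : Set G)) {φ : G → ℝ} (hφz : ∀ w, φ (w * z) = φ w)
    (hφ : ∀ K, IsCompact K → ∃ V ∈ 𝓝 (1 : G), ∀ k ∈ K, ∀ v ∈ V, φ (k * v) = φ k)
    (hg : g ∈ ContractionElt z) (hab : a + b = 1) (x : G) :
    EventuallyConst (fun n => (twoPointAvg a b (g * z) z)^[n] φ x) atTop := by
  have hφpow : ∀ w (n : ℕ), φ (w * z ^ n) = φ w := by
    intro w n
    induction n with
    | zero => simp
    | succ n ih => rw [pow_succ, ← mul_assoc, hφz, ih]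
  obtain ⟨M, hM⟩ := Filter.eventually_atTop.1 (hg.eventually_mem hU)
  obtain ⟨V, hV, hφV⟩ := hφ ((fun y => x * y * (z ^ M)⁻¹) '' ({g * z, z} ^ M) * U)
    ((((Set.toFinite _).pow M).image _).isCompact.mul hUc)
  obtain ⟨N, hN⟩ := Filter.eventually_atTop.1 (hg.eventually_mem hV)
  refine Filter.eventuallyConst_atTop_nat.2 ⟨M + N, fun n hn => ?_⟩
  obtain ⟨j, rfl⟩ := Nat.exists_eq_add_of_le (le_trans (Nat.le_add_right M N) hn)
  rw [Function.iterate_succ_apply]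
  refine twoPointAvg_iterate_congr fun y hy => ?_
  rw [pow_add] at hy
  obtain ⟨y₁, hy₁, y₂, hy₂, rfl⟩ := hy
  obtain ⟨u, hu, hzy⟩ := exists_mem_mul_pow_eq_of_mem_pow hM y₂ hy₂
  -- `x y = k z^(M+j)` with `k` in the compact set above, and appending `g z` to `y` multiplies
  -- `k` by `z^(M+j) g z^-(M+j) ∈ V`, which does not change `φ`.
  set k := x * y₁ * (z ^ M)⁻¹ * u
  have hk : k ∈ (fun y => x * y * (z ^ M)⁻¹) '' ({g * z, z} ^ M) * U :=
    Set.mul_mem_mul ⟨y₁, hy₁, rfl⟩ hu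
  have hxy : x * (y₁ * y₂) = k * z ^ (M + j) := by
    rw [show x * (y₁ * y₂) = x * y₁ * (z ^ M)⁻¹ * (z ^ M * y₂) by group, hzy]
    simp only [k, mul_assoc]
  calc twoPointAvg a b (g * z) z φ (x * (y₁ * y₂))
      = a * φ (k * (z ^ (M + j) * g * (z ^ (M + j))⁻¹) * z ^ (M + j + 1))
        + b * φ (k * z ^ (M + j + 1)) := by
        rw [twoPointAvg, hxy, pow_succ]; congr 3 <;> group
    _ = φ (x * (y₁ * y₂)) := by
        rw [hφpow, hφpow, hφV k hk _ (hN _ (by omega)), ← add_mul, hab, one_mul, hxy, hφpow]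

theorem exists_continuous_twoPointAvg_harmonic_ne {G : Type*} [Group G] [TopologicalSpace G]
    [IsTopologicalGroup G] [LocallyCompactSpace G] [TotallyDisconnectedSpace G] {a b : ℝ}
    {g z : G} (hg : g ∈ ContractionElt z) (hgne : g ≠ 1)
    (ha : 0 ≤ a) (hb : 0 ≤ b) (hab : a + b = 1) :
    ∃ h : G → ℝ, Continuous h ∧ (∀ x, |h x| ≤ 1) ∧
      (∀ x, h x = twoPointAvg a b (g * z) z h x) ∧ ∃ M : ℕ, h (g * z ^ M) ≠ h (z ^ M) := by
  set H := (Subgroup.zpowers z).topologicalClosure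
  have hzH : z ∈ H := Subgroup.le_topologicalClosure _ (Subgroup.mem_zpowers z)
  obtain ⟨U, hUo, hUc, hsep⟩ := exists_isOpen_isCompact_subgroup_mul_mul_notMem
    (Subgroup.zpowers z).isClosed_topologicalClosure (notMem_topologicalClosure_zpowers hg hgne)
  have hU1 : (U : Set G) ∈ 𝓝 1 := hUo.mem_nhds (one_mem U)
  set A : Set G := U * H
  have hAU : (U : Set G) * A ⊆ A := by rw [← mul_assoc, coe_mul_coe]
  have hA : IsClopen A := isClopen_of_mul_left_subset hUo hAU
  set f := A.indicator fun _ => (1 : ℝ)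
  set P := twoPointAvg a b (g * z) z
  have hstab : ∀ x, EventuallyConst (fun n => P^[n] f x) atTop := by
    refine twoPointAvg_iterate_eventuallyConst hU1 hUc (fun w => ?_) (fun K hK => ?_) hg hab
    · exact Set.indicator_const_eq_indicator_const (mul_mem_mul_subgroup_iff hzH w)
    · obtain ⟨V, hV, hKV⟩ := hA.exists_nhds_one_mul_mem_iff hK
      exact ⟨V, hV, fun k hk v hv => Set.indicator_const_eq_indicator_const (hKV k hk v hv)⟩
  set h := fun x => limUnder atTop fun n => P^[n] f x
  have hconv : ∀ x, Tendsto (fun n => P^[n] f x) atTop (𝓝 (h x)) := fun x => by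
    obtain ⟨c, hc⟩ := (hstab x).exists_tendsto
    exact tendsto_nhds_limUnder ⟨c, hc.mono_right (pure_le_nhds c)⟩
  have hconst : ∀ x c, (∀ n, P^[n] f x = c) → h x = c := fun x c hc =>
    tendsto_nhds_unique (hconv x) (by simp only [hc]; exact tendsto_const_nhds)
  refine ⟨h, ?_, ?_, eq_twoPointAvg_of_tendsto_iterate hconv, ?_⟩
  · refine continuous_of_forall_mul_left_eq hU1 fun u hu x => ?_
    have hfu : ∀ y, f (u * y) = f y := fun y => Set.indicator_const_eq_indicator_const
      ⟨fun h => by simpa using hAU (Set.mul_mem_mul (inv_mem hu) h),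
        fun h => hAU (Set.mul_mem_mul hu h)⟩
    simp only [h, P, twoPointAvg_iterate_mul_left hfu]
  · refine fun x => le_of_tendsto' (hconv x).abs fun n => abs_twoPointAvg_iterate_le ha hb hab
      (fun y => ?_) n x
    by_cases hy : y ∈ A <;> simp [f, hy]
  · obtain ⟨M, hM⟩ := Filter.eventually_atTop.1 (hg.eventually_mem hU1)
    have hwords := fun {n} {y} (hy : y ∈ ({g * z, z} : Set G) ^ n) =>
      mem_mul_and_notMem_mul_of_mem_pow hzH hsep hM hy
    refine ⟨M, ?_⟩
    rw [hconst (g * z ^ M) 0 fun n => ?_, hconst (z ^ M) 1 fun n => ?_]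
    · norm_num
    · rw [twoPointAvg_iterate_congr (ψ := fun _ => 1)
        fun y hy => Set.indicator_of_mem (hwords hy).1 _, twoPointAvg_iterate_const hab]
    · rw [twoPointAvg_iterate_congr (ψ := fun _ => 0)
        fun y hy => Set.indicator_of_notMem (hwords hy).2 _, twoPointAvg_iterate_const hab]

theorem smul_dirac_add_smul_dirac_mconv_dirac {M : Type*} [Monoid M] [MeasurableSpace M]
    [MeasurableSingletonClass M] (p q : ℝ≥0∞) (s t z : M) :
    (p • Measure.dirac s + q • Measure.dirac t).mconv (Measure.dirac z) =
      p • Measure.dirac (s * z) + q • Measure.dirac (t * z) := by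
  rw [Measure.mconv, Measure.add_prod, Measure.prod_smul_left, Measure.prod_smul_left,
    Measure.dirac_prod_dirac, Measure.dirac_prod_dirac,
    AEMeasurable.map_add₀ (aemeasurable_dirac.smul_measure _) (aemeasurable_dirac.smul_measure _),
    Measure.map_smul, Measure.map_smul, Measure.map_dirac, Measure.map_dirac]

theorem integral_smul_dirac_add_smul_dirac {X E : Type*} [MeasurableSpace X]
    [MeasurableSingletonClass X] [NormedAddCommGroup E] [NormedSpace ℝ E] [CompleteSpace E]
    {p q : ℝ≥0∞} (hp : p ≠ ⊤) (hq : q ≠ ⊤) (s t : X) (φ : X → E) :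
    ∫ x, φ x ∂(p • Measure.dirac s + q • Measure.dirac t) = p.toReal • φ s + q.toReal • φ t := by
  rw [integral_add_measure ((integrable_dirac enorm_lt_top).smul_measure hp)
    ((integrable_dirac enorm_lt_top).smul_measure hq), integral_smul_measure,
    integral_smul_measure, integral_dirac, integral_dirac]

theorem mem_adaptedSubgroup_of_pos {G : Type*} [Group G] [TopologicalSpace G]
    [IsTopologicalGroup G] [MeasurableSpace G] {μ : Measure G} {x : G} (hx : 0 < μ {x}) :
    x ∈ adaptedSubgroup μ :=
  Subgroup.le_topologicalClosure _ <| Subgroup.subset_closure fun _ hU =>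
    hx.trans_le (measure_mono (Set.singleton_subset_iff.2 (mem_of_mem_nhds hU)))

theorem lemma_3_5_general {G : Type*} [Group G] [TopologicalSpace G] [IsTopologicalGroup G]
    [TotallyDisconnectedSpace G] [LocallyCompactSpace G] [MeasurableSpace G] [BorelSpace G]
    (z g : G) (hg : g ∈ ContractionElt z) (hgne : g ≠ (1 : G))
    (p : ℝ≥0∞) (hp0 : 0 < p) (hp1 : p < 1) :
    ¬ IsChoquetDenyMeasure
        ((p • Measure.dirac g + (1 - p) • Measure.dirac (1 : G)).mconv (Measure.dirac z)) := by
  have hq : (1 : ℝ≥0∞) - p ≠ ⊤ := ENNReal.sub_ne_top ENNReal.one_ne_top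
  have hpq : p.toReal + (1 - p).toReal = 1 := by
    rw [← ENNReal.toReal_add hp1.ne_top hq, add_tsub_cancel_of_le hp1.le, ENNReal.toReal_one]
  obtain ⟨h, hcont, hbdd, hharm, M, hM⟩ := exists_continuous_twoPointAvg_harmonic_ne hg hgne
    ENNReal.toReal_nonneg ENNReal.toReal_nonneg hpq
  rw [smul_dirac_add_smul_dirac_mconv_dirac, one_mul]
  set μ := p • Measure.dirac (g * z) + (1 - p) • Measure.dirac z
  have hgz : g * z ∈ adaptedSubgroup μ := mem_adaptedSubgroup_of_pos (hp0.trans_le (by simp [μ]))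
  have hz : z ∈ adaptedSubgroup μ :=
    mem_adaptedSubgroup_of_pos ((tsub_pos_of_lt hp1).trans_le (by simp [μ]))
  have hconj : (z ^ M)⁻¹ * g * z ^ M ∈ adaptedSubgroup μ := by
    have hg : g ∈ adaptedSubgroup μ := by simpa using mul_mem hgz (inv_mem hz)
    exact mul_mem (mul_mem (inv_mem (pow_mem hz M)) hg) (pow_mem hz M)
  have hCharm : ∀ x, (h x : ℂ) = ∫ y, (h (x * y) : ℂ) ∂μ := fun x => by
    rw [integral_smul_dirac_add_smul_dirac hp1.ne_top hq, hharm x, twoPointAvg]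
    simp [Complex.real_smul]
  intro hCD
  simpa [mul_assoc, hM] using hCD (fun x => (h x : ℂ)) (Complex.continuous_ofReal.comp hcont)
    ⟨1, fun x => by simpa using hbdd x⟩ hCharm (z ^ M) _ hconj

/-- **Lemma 3.5.** Let `G` be a totally disconnected locally compact group and `z ∈ G` with
`C(z) ≠ {e}`. Let `g ∈ C(z)`, `g ≠ e`, and `ν = p·δ_g + (1-p)·δ_e` where `p ∈ (0,1)`,
`p ≠ 1/2`. Then `μ = ν * δ_z` is not a Choquet–Deny measure. -/
theorem lemma_3_5 {G : Type*} [Group G] [TopologicalSpace G] [IsTopologicalGroup G]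
    [TotallyDisconnectedSpace G] [LocallyCompactSpace G] [MeasurableSpace G] [BorelSpace G]
    (z g : G) (hg : g ∈ ContractionElt z) (hgne : g ≠ (1 : G))
    (p : ℝ≥0∞) (hp0 : 0 < p) (hp1 : p < 1) (hphalf : p ≠ 1 / 2) :
    ¬ IsChoquetDenyMeasure
        ((p • Measure.dirac g + (1 - p) • Measure.dirac (1 : G)).mconv (Measure.dirac z)) :=
  lemma_3_5_general z g hg hgne p hp0 hp1
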